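/- Let G be a group and F(1) ⊆ F(2) ⊆ ... finite subsets of G, and for each n let φ_{F(n)} : G → l¹(G) be the barycentric partition of unity φ_F(x) = χ_{xF}/|F|. Then ‖φ_{F(n)}(x) − φ_{F(n)}(y)‖₁ → 0 as n → ∞ for all pairs x, y ∈ G if and only if lim_{n→∞} |gF(n) Δ F(n)|/|F(n)| = 0 for every g ∈ G (the Følner condition). -/

import Mathlib

/-!
`‖φ_F(x) - φ_F(y)‖₁ = |xF Δ yF| / |F|`, and left multiplication by `y⁻¹` carries `xF Δ yF`
bijectively onto `(y⁻¹x)F Δ F`. So for every `n` the distance between `φ_{F(n)}(x)` and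
`φ_{F(n)}(y)` is exactly the Følner ratio of `F(n)` at `g = y⁻¹x`, and the two limit conditions
are the same family of sequences.
-/

open Filter Topology

theorem sum_abs_ite_mem_sub_ite_mem {α : Type*} [DecidableEq α] (A B : Finset α) :
    ∑ g ∈ A ∪ B, |(if g ∈ A then (1 : ℝ) else 0) - (if g ∈ B then 1 else 0)|
      = ((A \ B ∪ B \ A).card : ℝ) := by
  have h : ∀ g ∈ A ∪ B,
      |(if g ∈ A then (1 : ℝ) else 0) - (if g ∈ B then 1 else 0)|
        = if g ∈ A \ B ∪ B \ A then 1 else 0 := by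
    intro g _
    by_cases hA : g ∈ A <;> by_cases hB : g ∈ B <;> simp [hA, hB]
  rw [Finset.sum_congr rfl h, Finset.sum_boole]
  congr 2
  ext g
  by_cases hA : g ∈ A <;> by_cases hB : g ∈ B <;> simp [hA, hB]

theorem sum_abs_ite_mem_div_sub_ite_mem_div {α : Type*} [DecidableEq α] (A B : Finset α)
    {c : ℝ} (hc : 0 ≤ c) :
    ∑ g ∈ A ∪ B, |(if g ∈ A then (1 : ℝ) else 0) / c - (if g ∈ B then (1 : ℝ) else 0) / c|
      = ((A \ B ∪ B \ A).card : ℝ) / c := by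
  simp only [← sub_div, abs_div, abs_of_nonneg hc, ← Finset.sum_div,
    sum_abs_ite_mem_sub_ite_mem]

theorem card_image_mul_sdiff_union {G : Type*} [Group G] [DecidableEq G] (F : Finset G)
    (x y : G) :
    (F.image (x * ·) \ F.image (y * ·) ∪ F.image (y * ·) \ F.image (x * ·)).card
      = (F.image ((y⁻¹ * x) * ·) \ F ∪ F \ F.image ((y⁻¹ * x) * ·)).card := by
  have hy : Function.Injective (y * ·) := mul_right_injective y
  have hx : (y * ·) ∘ ((y⁻¹ * x) * ·) = (x * ·) := by
    funext a
    simp [mul_assoc]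
  rw [eq_comm, ← Finset.card_image_of_injective _ hy, Finset.image_union,
    Finset.image_sdiff _ _ hy, Finset.image_sdiff _ _ hy, Finset.image_image, hx]

theorem stmt_5 {G : Type*} [Group G] [DecidableEq G] (F : ℕ → Finset G) :
    (∀ x y : G,
        Tendsto (fun n =>
          ∑ g ∈ (F n).image (x * ·) ∪ (F n).image (y * ·),
            |(if g ∈ (F n).image (x * ·) then (1 : ℝ) else 0) / (F n).card -
              (if g ∈ (F n).image (y * ·) then (1 : ℝ) else 0) / (F n).card|)
          atTop (𝓝 0)) ↔
      ∀ g : G,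
        Tendsto (fun n =>
            ((((F n).image (g * ·) \ F n) ∪ (F n \ (F n).image (g * ·))).card : ℝ) /
              (F n).card)
          atTop (𝓝 0) := by
  simp only [sum_abs_ite_mem_div_sub_ite_mem_div _ _ (Nat.cast_nonneg _),
    card_image_mul_sdiff_union]
  constructor
  · intro h g
    simpa using h g 1
  · intro h x y
    exact h (y⁻¹ * x)
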